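/- arXiv:1603.05041 — 4 statements merged into one kernel-verified Lean document; each statement's English description precedes it below -/
import Mathlib

section
/- For every real x and nonnegative integer n and real α, lim_{a→1} (a-1)^n m_n^{a, α+1}(x/(1-a)) = L_n^{α}(x), where the limit is taken over a ≠ 1. -/
open Filter Topology Finset

/-- Generalized binomial coefficient C(y, k) = y(y-1)⋯(y-k+1)/k!. -/
noncomputable def gbinom (y : ℝ) (k : ℕ) : ℝ :=
  (∏ i ∈ Finset.range k, (y - i)) / (Nat.factorial k)

/-- Pochhammer symbol (y)_k = y(y+1)⋯(y+k-1). -/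
noncomputable def poch (y : ℝ) (k : ℕ) : ℝ :=
  ∏ i ∈ Finset.range k, (y + i)

/-- Laguerre polynomial L_n^α(x). -/
noncomputable def laguerre (n : ℕ) (α x : ℝ) : ℝ :=
  ∑ j ∈ Finset.range (n + 1), ((-x) ^ j / (Nat.factorial j)) * gbinom ((n : ℝ) + α) (n - j)

/-- Meixner polynomial m_n^{a,c}(x). -/
noncomputable def meixner (n : ℕ) (a c x : ℝ) : ℝ :=
  (a ^ n / (1 - a) ^ n) *
    ∑ j ∈ Finset.range (n + 1), (a⁻¹) ^ j * gbinom x j * gbinom (-x - c) (n - j)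

/-! Writing `a⁻¹ ^ j = ((a⁻¹ - 1) + 1) ^ j` and summing out `j` by Chu–Vandermonde turns the Meixner
sum into one with weights `(a⁻¹ - 1) ^ k = ((1 - a) / a) ^ k`. At `y = x / (1 - a)` the factor
`(1 - a) ^ k` clears the denominators of `C(y, k)`, so `(a - 1) ^ n m_n^{a, α+1}(x / (1 - a))` agrees
off `a = 1` with a polynomial in `a`. Its value at `a = 1` is the Laguerre polynomial, by upper
negation `C(-α-1-k, n-k) = (-1)^(n-k) C(n+α, n-k)`. -/

lemma gbinom_eq_ringChoose (y : ℝ) (k : ℕ) : gbinom y k = Ring.choose y k := by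
  rw [Ring.choose_eq_smul, ← Polynomial.aeval_eq_smeval, Polynomial.aeval_def,
    Polynomial.eval₂_eq_eval_map, descPochhammer_map, descPochhammer_eval_eq_prod_range, gbinom,
    smul_eq_mul, div_eq_inv_mul]

lemma gbinom_add (u v : ℝ) (m : ℕ) :
    gbinom (u + v) m = ∑ i ∈ range (m + 1), gbinom u i * gbinom v (m - i) := by
  simp only [gbinom_eq_ringChoose]
  rw [Ring.add_choose_eq m (Commute.all u v), Nat.sum_antidiagonal_eq_sum_range_succ_mk]

lemma choose_mul_gbinom (y : ℝ) {j k : ℕ} (hkj : k ≤ j) :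
    (j.choose k : ℝ) * gbinom y j = gbinom y k * gbinom (y - k) (j - k) := by
  simp only [gbinom_eq_ringChoose, ← Ring.choose_smul_choose y hkj, nsmul_eq_mul]

lemma gbinom_neg (r : ℝ) (m : ℕ) : gbinom (-r) m = (-1) ^ m * gbinom (r + m - 1) m := by
  simp only [gbinom_eq_ringChoose, Ring.choose_neg, Int.negOnePow_def, Units.smul_def]
  simp

lemma pow_mul_gbinom_div (x : ℝ) {t : ℝ} (ht : t ≠ 0) (k : ℕ) :
    t ^ k * gbinom (x / t) k = (∏ i ∈ range k, (x - i * t)) / k.factorial := by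
  have hfactor (i : ℕ) : x - i * t = t * (x / t - i) := by field_simp
  rw [prod_congr rfl fun i _ => hfactor i, prod_mul_distrib, prod_const, card_range, gbinom,
    mul_div_assoc]

lemma sum_choose_mul_gbinom_mul_gbinom (y z : ℝ) {k n : ℕ} (hkn : k ≤ n) :
    ∑ j ∈ Ico k (n + 1), (j.choose k : ℝ) * gbinom y j * gbinom z (n - j)
      = gbinom y k * gbinom (y + z - k) (n - k) := by
  rw [show y + z - k = (y - k) + z by ring, gbinom_add, mul_sum, sum_Ico_eq_sum_range,
    show n + 1 - k = n - k + 1 by omega]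
  refine sum_congr rfl fun i _ => ?_
  rw [choose_mul_gbinom y (Nat.le_add_right k i), Nat.add_sub_cancel_left,
    show n - (k + i) = n - k - i by omega, mul_assoc]

lemma sum_pow_mul_gbinom_mul_gbinom (b y z : ℝ) (n : ℕ) :
    ∑ j ∈ range (n + 1), b ^ j * gbinom y j * gbinom z (n - j)
      = ∑ k ∈ range (n + 1), (b - 1) ^ k * gbinom y k * gbinom (y + z - k) (n - k) := by
  have hbinom (j : ℕ) : b ^ j = ∑ k ∈ range (j + 1), (b - 1) ^ k * (j.choose k : ℝ) := by
    simpa using add_pow (b - 1) 1 j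
  calc ∑ j ∈ range (n + 1), b ^ j * gbinom y j * gbinom z (n - j)
      = ∑ j ∈ Ico 0 (n + 1), ∑ k ∈ Ico 0 (j + 1),
          (b - 1) ^ k * ((j.choose k : ℝ) * gbinom y j * gbinom z (n - j)) := by
        simp only [← range_eq_Ico, hbinom, sum_mul, mul_assoc]
    _ = ∑ k ∈ range (n + 1), (b - 1) ^ k *
          ∑ j ∈ Ico k (n + 1), (j.choose k : ℝ) * gbinom y j * gbinom z (n - j) := by
        rw [← sum_Ico_Ico_comm, range_eq_Ico]
        simp only [mul_sum]
    _ = ∑ k ∈ range (n + 1), (b - 1) ^ k * gbinom y k * gbinom (y + z - k) (n - k) := by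
        refine sum_congr rfl fun k hk => ?_
        rw [sum_choose_mul_gbinom_mul_gbinom y z (Nat.lt_succ_iff.mp (mem_range.mp hk)), mul_assoc]

lemma sub_one_pow_mul_meixner (n : ℕ) (c x : ℝ) {a : ℝ} (ha₀ : a ≠ 0) (ha₁ : a ≠ 1) :
    (a - 1) ^ n * meixner n a c (x / (1 - a)) = (-1) ^ n * ∑ k ∈ range (n + 1),
      a ^ (n - k) * ((∏ i ∈ range k, (x - i * (1 - a))) / k.factorial) * gbinom (-c - k) (n - k) := by
  have h1a : 1 - a ≠ 0 := sub_ne_zero.mpr ha₁.symm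
  rw [meixner, sum_pow_mul_gbinom_mul_gbinom, mul_sum, mul_sum, mul_sum]
  refine sum_congr rfl fun k hk => ?_
  rw [← pow_mul_gbinom_div x h1a, pow_sub₀ a ha₀ (Nat.lt_succ_iff.mp (mem_range.mp hk)),
    show x / (1 - a) + (-(x / (1 - a)) - c) - k = -c - k by ring,
    show a⁻¹ - 1 = (1 - a) / a by field_simp, show a - 1 = -(1 - a) by ring, neg_pow, div_pow]
  field_simp

lemma laguerre_eq_sum_gbinom_neg (n : ℕ) (α x : ℝ) :
    laguerre n α x = (-1) ^ n * ∑ k ∈ range (n + 1),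
      x ^ k / k.factorial * gbinom (-(α + 1) - k) (n - k) := by
  rw [laguerre, mul_sum]
  refine sum_congr rfl fun k hk => ?_
  have hkn : k ≤ n := Nat.lt_succ_iff.mp (mem_range.mp hk)
  have hsplit : (-1 : ℝ) ^ n = (-1) ^ k * (-1) ^ (n - k) := by
    rw [← pow_add, Nat.add_sub_cancel' hkn]
  have hsq : ((-1 : ℝ) ^ (n - k)) ^ 2 = 1 := by
    rw [← pow_mul, mul_comm, pow_mul, neg_one_sq, one_pow]
  rw [show -(α + 1) - k = -(α + 1 + k) by ring, gbinom_neg, Nat.cast_sub hkn,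
    show α + 1 + k + (n - k : ℝ) - 1 = n + α by ring, neg_pow, hsplit]
  linear_combination (-(-1) ^ k * x ^ k / k.factorial * gbinom (n + α) (n - k)) * hsq

theorem stmt4 (n : ℕ) (α x : ℝ) :
    Tendsto (fun a : ℝ => (a - 1) ^ n * meixner n a (α + 1) (x / (1 - a)))
      (𝓝[≠] (1 : ℝ)) (𝓝 (laguerre n α x)) := by
  set g : ℝ → ℝ := fun a => (-1) ^ n * ∑ k ∈ range (n + 1), a ^ (n - k) *
    ((∏ i ∈ range k, (x - i * (1 - a))) / k.factorial) * gbinom (-(α + 1) - k) (n - k)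
  have hg : Tendsto g (𝓝[≠] 1) (𝓝 (g 1)) :=
    ((show Continuous g by fun_prop).tendsto 1).mono_left nhdsWithin_le_nhds
  have hg₁ : g 1 = laguerre n α x := by
    simp [g, laguerre_eq_sum_gbinom_neg]
  rw [← hg₁]
  refine hg.congr' ?_
  filter_upwards [nhdsWithin_le_nhds (eventually_ne_nhds one_ne_zero), self_mem_nhdsWithin]
    with a ha₀ ha₁
  exact (sub_one_pow_mul_meixner n (α + 1) x ha₀ ha₁).symm
end

section
/- The dual Hahn polynomial R_n^{a,b,N} evaluated at θ_x^{a+b} = x(x+a+b+1) equals (-N)_n (a+1)_n · ₃F₂(-n, -x, x+a+b+1; a+1, -N; 1), i.e. R_n^{a,b,N}(θ_x^{a+b}) = Σ_{k=0}^n ((-n)_k (-x)_k (x+a+b+1)_k)/((a+1)_k (-N)_k k!) · (-N)_n (a+1)_n, provided a+1 and -N avoid the zeros making the terms undefined. -/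
open Filter Topology Finset

/-- λ_j^u(y) = ∏_{i=0}^{j-1} (y - i(u+i+1)). -/
noncomputable def lam (j : ℕ) (u y : ℝ) : ℝ :=
  ∏ i ∈ Finset.range j, (y - i * (u + i + 1))

/-- θ_x^u = x(x+u+1). -/
noncomputable def theta (x u : ℝ) : ℝ := x * (x + u + 1)

/-- Dual Hahn polynomial R_n^{a,b,N}(x). -/
noncomputable def dualHahn (n : ℕ) (a b N x : ℝ) : ℝ :=
  ∑ j ∈ Finset.range (n + 1),
    (poch (-(n : ℝ)) j * poch (-N + j) (n - j) * poch (a + j + 1) (n - j) /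
      ((-1) ^ j * (Nat.factorial j))) * lam j (a + b) x

/-!
At `θ_x^u = x(x+u+1)` each factor of `λ_j^u` factors as
`x(x+u+1) - i(u+i+1) = -(-x+i)(x+u+1+i)`, so `λ_j^u(θ_x^u) = (-1)^j (-x)_j (x+u+1)_j`.
Splitting `(-N)_n = (-N)_j (-N+j)_{n-j}` and `(a+1)_n = (a+1)_j (a+j+1)_{n-j}` then identifies
the two sums term by term.
-/

lemma poch_add (y : ℝ) (j m : ℕ) : poch y (j + m) = poch y j * poch (y + j) m := by
  unfold poch
  rw [prod_range_add]
  congr 1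
  refine prod_congr rfl fun i _ => ?_
  push_cast
  ring

lemma poch_mul_poch_sub {j n : ℕ} (hj : j ≤ n) (y : ℝ) :
    poch y j * poch (y + j) (n - j) = poch y n := by
  rw [← poch_add, Nat.add_sub_cancel' hj]

lemma poch_ne_zero {y : ℝ} {k : ℕ} (h : ∀ i < k, y + i ≠ 0) : poch y k ≠ 0 :=
  prod_ne_zero_iff.mpr fun i hi => h i (mem_range.mp hi)

lemma lam_theta (j : ℕ) (u x : ℝ) :
    lam j u (theta x u) = (-1) ^ j * (poch (-x) j * poch (x + u + 1) j) := by
  induction j with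
  | zero => simp [lam, poch]
  | succ j ih =>
    simp only [lam, poch, theta, prod_range_succ] at *
    rw [ih]
    ring

theorem stmt13 (n : ℕ) (a b N x : ℝ)
    (ha : ∀ k : ℕ, k < n → a + 1 + k ≠ 0) (hN : ∀ k : ℕ, k < n → -N + k ≠ 0) :
    dualHahn n a b N (theta x (a + b)) =
      (∑ k ∈ Finset.range (n + 1),
          poch (-(n : ℝ)) k * poch (-x) k * poch (x + a + b + 1) k /
            (poch (a + 1) k * poch (-N) k * (Nat.factorial k))) *
        (poch (-N) n * poch (a + 1) n) := by
  rw [dualHahn, sum_mul]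
  refine sum_congr rfl fun j hj => ?_
  have hjn : j ≤ n := Nat.lt_succ_iff.mp (mem_range.mp hj)
  have hA : poch (a + 1) j ≠ 0 := poch_ne_zero fun i hi => ha i (hi.trans_le hjn)
  have hN' : poch (-N) j ≠ 0 := poch_ne_zero fun i hi => hN i (hi.trans_le hjn)
  have hfac : (j.factorial : ℝ) ≠ 0 := mod_cast j.factorial_ne_zero
  have hsign : (-1 : ℝ) ^ j ≠ 0 := pow_ne_zero _ (by norm_num)
  rw [lam_theta, ← poch_mul_poch_sub hjn (-N), ← poch_mul_poch_sub hjn (a + 1),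
    show x + (a + b) + 1 = x + a + b + 1 by ring, show a + 1 + j = a + j + 1 by ring]
  field_simp
end

section
/- Let κ be a positive integer and a, b real with b ∉ {1,...,κ}. Then for every real z, lim_{N→∞} R_κ^{-b,-a,a+b+N}(z)/N^κ = (b-κ)_κ, where the limit is over real N → ∞ and (y)_κ is the Pochhammer symbol. -/
open Filter Topology Finset

/-! Only the factor `(-(a + b + N) + j)_(κ - j)` of the `j`-th term of `R_κ` depends on `N`; as a
function of `N` it is `(-N)^(κ - j)` up to lower order terms. After division by `N ^ κ`, every
term with `j ≥ 1` vanishes in the limit and the `j = 0` term tends to `(-1)^κ (1 - b)_κ`, which is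
`(b - κ)_κ` by reflecting the Pochhammer product. -/

theorem poch_sub_self (y : ℝ) (k : ℕ) : poch (y - k) k = (-1) ^ k * poch (1 - y) k := by
  rw [poch, poch, ← prod_range_reflect (fun i => y - k + i), pow_eq_prod_const,
    ← prod_mul_distrib]
  refine prod_congr rfl fun i hi => ?_
  rw [Nat.sub_sub, Nat.cast_sub (by simp at hi; omega)]
  push_cast
  ring

theorem tendsto_poch_sub_div_pow (c : ℝ) (m : ℕ) :
    Tendsto (fun N : ℝ => poch (c - N) m / N ^ m) atTop (𝓝 ((-1) ^ m)) := by
  have hfactor : ∀ N : ℝ, N ≠ 0 →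
      ∏ i ∈ range m, ((c + i) * N⁻¹ - 1) = poch (c - N) m / N ^ m := by
    intro N hN
    rw [poch, pow_eq_prod_const, ← prod_div_distrib]
    refine prod_congr rfl fun i _ => ?_
    field_simp
    ring
  refine Tendsto.congr' ((eventually_ne_atTop 0).mono hfactor) ?_
  rw [pow_eq_prod_const]
  refine tendsto_finsetProd _ fun i _ => ?_
  simpa using (tendsto_inv_atTop_zero.const_mul (c + i)).sub_const 1

theorem tendsto_poch_sub_div_pow_of_lt (c : ℝ) {m k : ℕ} (hmk : m < k) :
    Tendsto (fun N : ℝ => poch (c - N) m / N ^ k) atTop (𝓝 0) := by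
  have hsplit : (fun N : ℝ => poch (c - N) m / N ^ k) =
      fun N => poch (c - N) m / N ^ m * N⁻¹ ^ (k - m) := by
    ext N
    rw [inv_pow, ← div_eq_mul_inv, div_div, ← pow_add, Nat.add_sub_cancel' hmk.le]
  have hinv := (tendsto_inv_atTop_zero (𝕜 := ℝ)).pow (k - m)
  rw [zero_pow (Nat.sub_ne_zero_of_lt hmk)] at hinv
  rw [hsplit, ← mul_zero ((-1 : ℝ) ^ m)]
  exact (tendsto_poch_sub_div_pow c m).mul hinv

theorem stmt14_general (κ : ℕ) (a b : ℝ) (z : ℝ) :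
    Tendsto (fun N : ℝ => dualHahn κ (-b) (-a) (a + b + N) z / N ^ κ) atTop
      (𝓝 (poch (b - κ) κ)) := by
  set coeff : ℕ → ℝ := fun j => poch (-(κ : ℝ)) j * poch (-b + j + 1) (κ - j) /
      ((-1) ^ j * (Nat.factorial j)) * lam j (-b + -a) z
  have hterm : ∀ j ∈ range (κ + 1),
      Tendsto (fun N : ℝ => poch ((j - (a + b)) - N) (κ - j) / N ^ κ) atTop
        (𝓝 (if j = 0 then (-1) ^ κ else 0)) := by
    intro j hj
    split_ifs with hj0
    · subst hj0
      simpa using tendsto_poch_sub_div_pow (-(a + b)) κ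
    · exact tendsto_poch_sub_div_pow_of_lt _ (by simp at hj; omega)
  have hsum := tendsto_finsetSum _ fun j hj => (hterm j hj).const_mul (coeff j)
  convert hsum using 2 with N
  · rw [dualHahn, sum_div]
    refine sum_congr rfl fun j _ => ?_
    rw [show -(a + b + N) + j = (j - (a + b)) - N by ring]
    ring
  · rw [poch_sub_self]
    simp [coeff, poch, lam, neg_add_eq_sub, mul_comm]

theorem stmt14 (κ : ℕ) (hκ : 0 < κ) (a b : ℝ)
    (hb : ∀ j : ℕ, 1 ≤ j → j ≤ κ → b ≠ (j : ℝ)) (z : ℝ) :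
    Tendsto (fun N : ℝ => dualHahn κ (-b) (-a) (a + b + N) z / N ^ κ) atTop
      (𝓝 (poch (b - κ) κ)) :=
  stmt14_general κ a b z
end

section
/- Let κ be a positive integer, s real, and ψ a real function with lim_{N→∞} ψ(N) = a. Set φ_κ^s(N) = κ + s/N^κ. Then for every real z, lim_{N→∞} R_κ^{-φ_κ^s(N), -ψ(N), ψ(N)+φ_κ^s(N)+N}(z) = (κ-1)!·s + λ_κ^{-κ-a}(z). -/
open Filter Topology Finset

/-!
Split `R_κ` into its `κ + 1` summands. The `j = κ` summand is `λ_κ^{A+B}(z)` with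
`A + B = -φ_κ^s(N) - ψ(N) → -κ - a`. For `j < κ` the last factor of `(A + j + 1)_{κ-j}`, with
`A = -φ_κ^s(N)`, is `A + κ = -s/N^κ`, while `(-M + j)_{κ-j} ~ (-N)^{κ-j}` because the third
parameter `M` is `N + O(1)`. So the `j`-th summand is `O(N^{-j})`: it vanishes in the limit for
`0 < j`, and for `j = 0` it tends to `-s (-1)^κ (1-κ)_{κ-1} = (κ-1)! s`.
-/

lemma poch_zero (y : ℝ) : poch y 0 = 1 := by simp [poch]

lemma poch_succ (y : ℝ) (k : ℕ) : poch y (k + 1) = poch y k * (y + k) :=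
  prod_range_succ _ _

lemma poch_eq_neg_one_pow_mul_descPochhammer_eval (y : ℝ) (k : ℕ) :
    poch y k = (-1) ^ k * (descPochhammer ℝ k).eval (-y) := by
  have h := pow_card_mul_prod (s := range k) (b := (-1 : ℝ)) (f := fun i : ℕ => -y - i)
  rw [card_range] at h
  rw [descPochhammer_eval_eq_prod_range, h, poch]
  exact prod_congr rfl fun i _ => by ring

lemma poch_neg_natCast_self (n : ℕ) : poch (-(n : ℝ)) n = (-1) ^ n * n.factorial := by
  rw [poch_eq_neg_one_pow_mul_descPochhammer_eval, neg_neg, descPochhammer_eval_eq_descFactorial,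
    Nat.descFactorial_self]

lemma continuous_poch (k : ℕ) : Continuous fun y => poch y k := by
  unfold poch; fun_prop

lemma lam_zero (u y : ℝ) : lam 0 u y = 1 := by simp [lam]

lemma continuous_lam (j : ℕ) (y : ℝ) : Continuous fun u => lam j u y := by
  unfold lam; fun_prop

lemma tendsto_poch_div_pow {g : ℝ → ℝ} {c : ℝ} (hg : Tendsto (fun N => g N / N) atTop (𝓝 c))
    (k : ℕ) : Tendsto (fun N => poch (g N) k / N ^ k) atTop (𝓝 (c ^ k)) := by
  have hfactor (i : ℕ) : Tendsto (fun N => (g N + i) / N) atTop (𝓝 c) := by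
    simpa [add_div] using hg.add (tendsto_const_nhds.div_atTop tendsto_id)
  simpa [poch, prod_div_distrib] using tendsto_finsetProd (range k) fun i _ => hfactor i

lemma tendsto_sub_self_div_self {f : ℝ → ℝ} {L : ℝ} (hf : Tendsto f atTop (𝓝 L)) :
    Tendsto (fun N => (f N - N) / N) atTop (𝓝 (-1)) := by
  have h := (hf.div_atTop tendsto_id).sub_const 1
  rw [zero_sub] at h
  refine h.congr' ?_
  filter_upwards [eventually_ne_atTop 0] with N hN
  rw [sub_div, id, div_self hN]

noncomputable def dualHahnTerm (n : ℕ) (a b N x : ℝ) (j : ℕ) : ℝ :=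
  (poch (-(n : ℝ)) j * poch (-N + j) (n - j) * poch (a + j + 1) (n - j) /
    ((-1) ^ j * (Nat.factorial j))) * lam j (a + b) x

lemma dualHahn_eq_sum_dualHahnTerm (n : ℕ) (a b N x : ℝ) :
    dualHahn n a b N x = ∑ j ∈ range (n + 1), dualHahnTerm n a b N x j := rfl

noncomputable def phi (κ : ℕ) (s N : ℝ) : ℝ := κ + s / N ^ κ

lemma tendsto_phi {κ : ℕ} (hκ : 0 < κ) (s : ℝ) : Tendsto (phi κ s) atTop (𝓝 κ) := by
  show Tendsto (fun N : ℝ => (κ : ℝ) + s / N ^ κ) atTop (𝓝 κ)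
  simpa using tendsto_const_nhds.add ((tendsto_pow_atTop hκ.ne').const_div_atTop s)

section Limit

variable {κ : ℕ} {s a : ℝ} {ψ : ℝ → ℝ}

lemma tendsto_lam_neg_phi_add_neg (hκ : 0 < κ) (hψ : Tendsto ψ atTop (𝓝 a)) (j : ℕ) (z : ℝ) :
    Tendsto (fun N => lam j (-phi κ s N + -(ψ N)) z) atTop (𝓝 (lam j (-κ - a) z)) := by
  have hparam := (tendsto_phi hκ s).neg.add hψ.neg
  rw [← sub_eq_add_neg] at hparam
  exact ((continuous_lam j z).tendsto _).comp hparam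

lemma tendsto_dualHahnTerm_of_lt (hψ : Tendsto ψ atTop (𝓝 a)) (z : ℝ) {j m : ℕ}
    (hκ : κ = j + m + 1) :
    Tendsto (fun N => dualHahnTerm κ (-phi κ s N) (-(ψ N)) (ψ N + phi κ s N + N) z j) atTop
      (𝓝 (-(s * (-1) ^ (m + 1) * 0 ^ j) * (poch (-(κ : ℝ)) j / ((-1) ^ j * j.factorial)) *
        poch (-(κ : ℝ) + j + 1) m * lam j (-κ - a) z)) := by
  have hκR : (κ : ℝ) = j + m + 1 := by exact_mod_cast hκ
  have hpoch_last (N : ℝ) :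
      poch (-phi κ s N + j + 1) (m + 1) = poch (-phi κ s N + j + 1) m * -(s / N ^ κ) := by
    rw [poch_succ, phi, hκR]; ring
  have hsplit (N : ℝ) : s / N ^ κ = s * (N ^ (m + 1))⁻¹ * N⁻¹ ^ j := by
    rw [hκ, div_eq_mul_inv, add_assoc, pow_add, mul_inv, inv_pow]; ring
  have hterm (N : ℝ) : dualHahnTerm κ (-phi κ s N) (-(ψ N)) (ψ N + phi κ s N + N) z j =
      -(s * (poch (-(ψ N + phi κ s N + N) + j) (m + 1) / N ^ (m + 1)) * N⁻¹ ^ j) *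
        (poch (-(κ : ℝ)) j / ((-1) ^ j * j.factorial)) * poch (-phi κ s N + j + 1) m *
        lam j (-phi κ s N + -(ψ N)) z := by
    rw [dualHahnTerm, show κ - j = m + 1 by omega, hpoch_last, hsplit]; ring
  have hκ₀ : 0 < κ := by omega
  have hpoch_far : Tendsto (fun N => poch (-(ψ N + phi κ s N + N) + j) (m + 1) / N ^ (m + 1))
      atTop (𝓝 ((-1) ^ (m + 1))) := by
    refine tendsto_poch_div_pow ?_ _
    exact (tendsto_sub_self_div_self ((hψ.add (tendsto_phi hκ₀ s)).neg.add_const (j : ℝ))).congr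
      fun N => by ring
  have hpoch_near : Tendsto (fun N => poch (-phi κ s N + j + 1) m) atTop
      (𝓝 (poch (-(κ : ℝ) + j + 1) m)) :=
    ((continuous_poch m).tendsto _).comp (((tendsto_phi hκ₀ s).neg.add_const _).add_const _)
  simp_rw [hterm]
  exact (((((hpoch_far.const_mul s).mul (tendsto_inv_atTop_zero.pow j)).neg.mul_const _).mul
    hpoch_near).mul (tendsto_lam_neg_phi_add_neg hκ₀ hψ j z))

lemma tendsto_dualHahnTerm_zero (hκ : 0 < κ) (hψ : Tendsto ψ atTop (𝓝 a)) (z : ℝ) :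
    Tendsto (fun N => dualHahnTerm κ (-phi κ s N) (-(ψ N)) (ψ N + phi κ s N + N) z 0) atTop
      (𝓝 ((κ - 1).factorial * s)) := by
  obtain ⟨m, rfl⟩ : ∃ m, κ = m + 1 := ⟨κ - 1, by omega⟩
  convert tendsto_dualHahnTerm_of_lt (κ := m + 1) hψ z (j := 0) (m := m) (by omega) using 2
  have hpoch : poch (-((m + 1 : ℕ) : ℝ) + (0 : ℕ) + 1) m = (-1) ^ m * m.factorial := by
    rw [← poch_neg_natCast_self]; congr 1; push_cast; ring
  have hsign : ((-1 : ℝ) ^ m) ^ 2 = 1 := by rw [← pow_mul, mul_comm, pow_mul, neg_one_sq, one_pow]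
  rw [hpoch, lam_zero, poch_zero, Nat.add_sub_cancel]
  linear_combination (-(m.factorial * s : ℝ)) * hsign

lemma tendsto_dualHahnTerm_of_pos_of_lt (hψ : Tendsto ψ atTop (𝓝 a)) (z : ℝ) {j : ℕ}
    (hj₀ : 0 < j) (hj : j < κ) :
    Tendsto (fun N => dualHahnTerm κ (-phi κ s N) (-(ψ N)) (ψ N + phi κ s N + N) z j) atTop
      (𝓝 0) := by
  simpa [zero_pow hj₀.ne'] using
    tendsto_dualHahnTerm_of_lt (κ := κ) hψ z (j := j) (m := κ - j - 1) (by omega)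

lemma tendsto_dualHahnTerm_self (hκ : 0 < κ) (hψ : Tendsto ψ atTop (𝓝 a)) (z : ℝ) :
    Tendsto (fun N => dualHahnTerm κ (-phi κ s N) (-(ψ N)) (ψ N + phi κ s N + N) z κ) atTop
      (𝓝 (lam κ (-κ - a) z)) := by
  have hcoeff : poch (-(κ : ℝ)) κ / ((-1) ^ κ * κ.factorial) = 1 := by
    rw [poch_neg_natCast_self, div_self (by positivity)]
  simpa [dualHahnTerm, poch_zero, hcoeff] using tendsto_lam_neg_phi_add_neg hκ hψ κ z

end Limit

theorem stmt16 (κ : ℕ) (hκ : 0 < κ) (s a : ℝ) (ψ : ℝ → ℝ)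
    (hψ : Tendsto ψ atTop (𝓝 a)) (z : ℝ) :
    Tendsto
      (fun N : ℝ =>
        dualHahn κ (-((κ : ℝ) + s / N ^ κ)) (-(ψ N))
          (ψ N + ((κ : ℝ) + s / N ^ κ) + N) z)
      atTop (𝓝 ((Nat.factorial (κ - 1)) * s + lam κ (-(κ : ℝ) - a) z)) := by
  obtain ⟨n, rfl⟩ : ∃ n, κ = n + 1 := ⟨κ - 1, by omega⟩
  have hmiddle : Tendsto (fun N => ∑ j ∈ range n,
      dualHahnTerm (n + 1) (-phi (n + 1) s N) (-(ψ N)) (ψ N + phi (n + 1) s N + N) z (j + 1))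
      atTop (𝓝 0) := by
    simpa using tendsto_finsetSum (range n) fun j hj =>
      tendsto_dualHahnTerm_of_pos_of_lt hψ z j.succ_pos (by simpa using hj)
  show Tendsto (fun N =>
    dualHahn (n + 1) (-phi (n + 1) s N) (-(ψ N)) (ψ N + phi (n + 1) s N + N) z) atTop _
  simp only [dualHahn_eq_sum_dualHahnTerm, sum_range_succ _ (n + 1), sum_range_succ']
  simpa only [zero_add] using (hmiddle.add (tendsto_dualHahnTerm_zero hκ hψ z)).add
    (tendsto_dualHahnTerm_self hκ hψ z)
end
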